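/- Let ψ = ψ_1 ⊗ ψ_2 be a nonzero state vector for a bipartite system, where ψ_j is an n_j-qubit state vector for j = 1,2. Let B' = T'_{j_1} ∪ ⋯ ∪ T'_{j_m} be a union of triples of ψ_1 (so 1 ≤ j_1 < ⋯ < j_m ≤ n_1), and let B = T_{j_1} ∪ ⋯ ∪ T_{j_m} be the corresponding union of triples of ψ. Then dim_ℝ⟨B'⟩ = dim_ℝ⟨B⟩. -/

import Mathlib

/-- An `n`-qubit state vector, identified with its coefficient function. -/
abbrev QState (n : ℕ) := (Fin n → Fin 2) → ℂ

/-- Complement the `k`-th bit of a multi-index. -/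
def flipBit {n : ℕ} (k : Fin n) (I : Fin n → Fin 2) : Fin n → Fin 2 :=
  Function.update I k (1 - I k)

/-- `(A_k ψ)(I) = i (−1)^{i_k} c_I`. -/
def Aop {n : ℕ} (k : Fin n) (ψ : QState n) : QState n :=
  fun I => Complex.I * (-1 : ℂ) ^ ((I k : ℕ)) * ψ I

/-- `(B_k ψ)(I) = (−1)^{i_k} c_{I_k}`. -/
def Bop {n : ℕ} (k : Fin n) (ψ : QState n) : QState n :=
  fun I => (-1 : ℂ) ^ ((I k : ℕ)) * ψ (flipBit k I)

/-- `(C_k ψ)(I) = i c_{I_k}`. -/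
def Cop {n : ℕ} (k : Fin n) (ψ : QState n) : QState n :=
  fun I => Complex.I * ψ (flipBit k I)

/-- The triple `T_k = {A_k ψ, B_k ψ, C_k ψ}`. -/
def triple {n : ℕ} (k : Fin n) (ψ : QState n) : Set (QState n) :=
  {Aop k ψ, Bop k ψ, Cop k ψ}

/-- Real inner product: the real part of the Hermitian inner product. -/
def rdot {n : ℕ} (φ ψ : QState n) : ℝ :=
  ∑ I : Fin n → Fin 2, ((starRingEnd ℂ) (φ I) * ψ I).re

/-- Real dimension of the span of a set of vectors. -/
noncomputable def rdim {n : ℕ} (S : Set (QState n)) : ℕ :=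
  Module.finrank ℝ (Submodule.span ℝ S)

/-- The set of columns of the matrix `M` associated to `ψ`. -/
def columns {n : ℕ} (ψ : QState n) : Set (QState n) :=
  (⋃ k : Fin n, triple k ψ) ∪ {(-Complex.I) • ψ}

/-- `rank_ℝ M`: the real dimension of the span of the columns of `M`. -/
noncomputable def rankM {n : ℕ} (ψ : QState n) : ℕ := rdim (columns ψ)

/-- The action of `(U_1, …, U_n) ∈ SU(2)^n` on an `n`-qubit state,
`U_1 ⊗ ⋯ ⊗ U_n`. -/
noncomputable def actLU {n : ℕ} (U : ∀ _ : Fin n, Matrix.specialUnitaryGroup (Fin 2) ℂ)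
    (ψ : QState n) : QState n :=
  fun I => ∑ J : Fin n → Fin 2, (∏ k : Fin n, (U k : Matrix (Fin 2) (Fin 2) ℂ) (I k) (J k)) * ψ J

/-- Local unitary equivalence of two state vectors. -/
def LUEquiv {n : ℕ} (ψ ψ' : QState n) : Prop :=
  ∃ U : ∀ _ : Fin n, Matrix.specialUnitaryGroup (Fin 2) ℂ, actLU U ψ = ψ'

/-- Tensor product of coefficient functions. -/
def tensorState {n₁ n₂ : ℕ} (ψ₁ : QState n₁) (ψ₂ : QState n₂) : QState (n₁ + n₂) :=
  fun I => ψ₁ (fun k => I (Fin.castAdd n₂ k)) * ψ₂ (fun k => I (Fin.natAdd n₁ k))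

/-- A perfect matching of the `n` qubits, encoded as an involution with no fixed
point when `n` is even and exactly one fixed point (the leftover qubit) when `n`
is odd. -/
def IsMatching {n : ℕ} (m : Fin n → Fin n) : Prop :=
  Function.Involutive m ∧ (Finset.univ.filter fun k => m k = k).card = n % 2

/-- The singlet product for a matching `m`: the tensor product over matched pairs
of `|00⟩ + |11⟩`, times the single-qubit vector `χ` in the leftover qubit when `n`
is odd. -/
def singletProduct {n : ℕ} (m : Fin n → Fin n) (χ : Fin 2 → ℂ) : QState n :=
  fun I => (∏ k : Fin n, if I k = I (m k) then (1 : ℂ) else 0) *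
    ∏ k ∈ Finset.univ.filter (fun k => m k = k), χ (I k)

/-- The minimum possible rank of `M`: `3n/2 + 1` for even `n`, `(3n+1)/2 + 1` for odd `n`. -/
def minRank (n : ℕ) : ℕ := if Even n then 3 * n / 2 + 1 else (3 * n + 1) / 2 + 1

/-!
Tensoring with a fixed nonzero `ψ₂` is an injective real-linear map `φ ↦ φ ⊗ ψ₂`, and it
carries the triple `T'_k` of `ψ₁` onto the triple `T_k` of `ψ₁ ⊗ ψ₂`, since the operators
`A_k, B_k, C_k` only touch the `k`-th qubit. An injective linear map preserves the dimension
of spans.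
-/

lemma flipBit_comp_of_injective {m n : ℕ} {f : Fin m → Fin n} (hf : Function.Injective f)
    (k : Fin m) (I : Fin n → Fin 2) : flipBit (f k) I ∘ f = flipBit k (I ∘ f) :=
  Function.update_comp_eq_of_injective I hf k _

lemma flipBit_comp_of_forall_ne {m n : ℕ} {f : Fin m → Fin n} {k : Fin n}
    (hf : ∀ j, f j ≠ k) (I : Fin n → Fin 2) : flipBit k I ∘ f = I ∘ f :=
  Function.update_comp_eq_of_forall_ne I _ hf

lemma flipBit_castAdd_comp_castAdd {n₁ n₂ : ℕ} (k : Fin n₁) (I : Fin (n₁ + n₂) → Fin 2) :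
    flipBit (Fin.castAdd n₂ k) I ∘ Fin.castAdd n₂ = flipBit k (I ∘ Fin.castAdd n₂) :=
  flipBit_comp_of_injective (Fin.castAdd_injective n₁ n₂) k I

lemma flipBit_castAdd_comp_natAdd {n₁ n₂ : ℕ} (k : Fin n₁) (I : Fin (n₁ + n₂) → Fin 2) :
    flipBit (Fin.castAdd n₂ k) I ∘ Fin.natAdd n₁ = I ∘ Fin.natAdd n₁ :=
  flipBit_comp_of_forall_ne (fun j h => by simp [Fin.ext_iff] at h; omega) I

def tensorRight {n₁ n₂ : ℕ} (ψ₂ : QState n₂) : QState n₁ →ₗ[ℂ] QState (n₁ + n₂) where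
  toFun φ := tensorState φ ψ₂
  map_add' _ _ := funext fun _ => add_mul _ _ _
  map_smul' c _ := funext fun _ => mul_assoc c _ _

@[simp]
lemma tensorRight_apply {n₁ n₂ : ℕ} (ψ₂ : QState n₂) (φ : QState n₁) :
    tensorRight ψ₂ φ = tensorState φ ψ₂ := rfl

lemma tensorState_append {n₁ n₂ : ℕ} (ψ₁ : QState n₁) (ψ₂ : QState n₂)
    (I : Fin n₁ → Fin 2) (J : Fin n₂ → Fin 2) :
    tensorState ψ₁ ψ₂ (Fin.append I J) = ψ₁ I * ψ₂ J := by
  simp [tensorState, Fin.append_left, Fin.append_right]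

lemma tensorRight_injective {n₁ n₂ : ℕ} {ψ₂ : QState n₂} (hψ₂ : ψ₂ ≠ 0) :
    Function.Injective (tensorRight (n₁ := n₁) ψ₂) := by
  obtain ⟨J, hJ⟩ := Function.ne_iff.mp hψ₂
  refine (injective_iff_map_eq_zero _).mpr fun φ hφ => funext fun I => ?_
  have h := congrFun hφ (Fin.append I J)
  rw [tensorRight_apply, tensorState_append] at h
  exact (mul_eq_zero.mp h).resolve_right hJ

lemma tensorState_Aop {n₁ n₂ : ℕ} (k : Fin n₁) (ψ₁ : QState n₁) (ψ₂ : QState n₂) :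
    tensorState (Aop k ψ₁) ψ₂ = Aop (Fin.castAdd n₂ k) (tensorState ψ₁ ψ₂) := by
  funext I
  simp only [tensorState, Aop]
  ring

lemma tensorState_flipBit_castAdd {n₁ n₂ : ℕ} (ψ₁ : QState n₁) (ψ₂ : QState n₂) (k : Fin n₁)
    (I : Fin (n₁ + n₂) → Fin 2) :
    tensorState ψ₁ ψ₂ (flipBit (Fin.castAdd n₂ k) I) =
      ψ₁ (flipBit k (I ∘ Fin.castAdd n₂)) * ψ₂ (I ∘ Fin.natAdd n₁) :=
  congr_arg₂ (· * ·) (congrArg ψ₁ (flipBit_castAdd_comp_castAdd k I))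
    (congrArg ψ₂ (flipBit_castAdd_comp_natAdd k I))

lemma tensorState_Bop {n₁ n₂ : ℕ} (k : Fin n₁) (ψ₁ : QState n₁) (ψ₂ : QState n₂) :
    tensorState (Bop k ψ₁) ψ₂ = Bop (Fin.castAdd n₂ k) (tensorState ψ₁ ψ₂) :=
  funext fun I => by
    rw [Bop, tensorState_flipBit_castAdd]
    exact mul_assoc _ _ _

lemma tensorState_Cop {n₁ n₂ : ℕ} (k : Fin n₁) (ψ₁ : QState n₁) (ψ₂ : QState n₂) :
    tensorState (Cop k ψ₁) ψ₂ = Cop (Fin.castAdd n₂ k) (tensorState ψ₁ ψ₂) :=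
  funext fun I => by
    rw [Cop, tensorState_flipBit_castAdd]
    exact mul_assoc _ _ _

lemma image_tensorRight_triple {n₁ n₂ : ℕ} (k : Fin n₁) (ψ₁ : QState n₁) (ψ₂ : QState n₂) :
    tensorRight ψ₂ '' triple k ψ₁ = triple (Fin.castAdd n₂ k) (tensorState ψ₁ ψ₂) := by
  simp only [triple, Set.image_insert_eq, Set.image_singleton, tensorRight_apply,
    tensorState_Aop, tensorState_Bop, tensorState_Cop]

lemma rdim_image_of_injective {m n : ℕ} (f : QState m →ₗ[ℝ] QState n)
    (hf : Function.Injective f) (S : Set (QState m)) : rdim (f '' S) = rdim S := by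
  rw [rdim, rdim, ← Submodule.map_span]
  exact (Submodule.equivMapOfInjective f hf _).finrank_eq.symm

/-- For a nonzero bipartite product state `ψ = ψ₁ ⊗ ψ₂`, a union of
triples of `ψ₁` has the same span dimension as the corresponding union of triples
of `ψ`. -/
theorem bipartite_triple_span_eq {n₁ n₂ : ℕ} (ψ₁ : QState n₁) (ψ₂ : QState n₂)
    (hψ : tensorState ψ₁ ψ₂ ≠ 0) (J : Set (Fin n₁)) :
    rdim (⋃ k ∈ J, triple k ψ₁) =
      rdim (⋃ k ∈ J, triple (Fin.castAdd n₂ k) (tensorState ψ₁ ψ₂)) := by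
  have hψ₂ : ψ₂ ≠ 0 := by
    rintro rfl
    exact hψ (funext fun I => mul_zero _)
  have hinj := tensorRight_injective (n₁ := n₁) hψ₂
  rw [← rdim_image_of_injective ((tensorRight ψ₂).restrictScalars ℝ) hinj,
    LinearMap.coe_restrictScalars, Set.image_iUnion₂]
  simp only [image_tensorRight_triple]
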